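/- (Duration part of Theorem 1.) Let ξ be a DoS sequence satisfying Assumption 1, and let B̂_d(t) be generated by the DoS estimator with parameters ℓ ≥ 2, ε₀ ∈ (0,1), θ ∈ (0,1). Then there exists a finite T ≥ 0 such that for every t ≥ T, the value B̂_d(t) is a duration-bound of ξ (i.e., B̂_d(t) ∈ D(ξ)). -/

import Mathlib

open MeasureTheory Filter Set

/-- The union of all DoS intervals `[h n, h n + τ n)`, `n ≥ 1`. -/
def DoSUnion (h τ : ℕ → ℝ) : Set ℝ :=
  ⋃ n ∈ Set.Ici (1 : ℕ), Set.Ico (h n) (h n + τ n)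

/-- `|Ξ(0,t)|`: the Lebesgue measure of the part of `[0,t]` under DoS attack. -/
noncomputable def xiMeas (h τ : ℕ → ℝ) (t : ℝ) : ℝ :=
  (volume (DoSUnion h τ ∩ Set.Icc 0 t)).toReal

/-- `n_ξ(0,t)`: the number of DoS off-to-on transitions `h n` lying in `[0,t]`. -/
noncomputable def nXi (h : ℕ → ℝ) (t : ℝ) : ℕ :=
  Set.ncard ({x : ℝ | ∃ n : ℕ, 1 ≤ n ∧ h n = x} ∩ Set.Icc 0 t)

/-- `ξ = (h, τ)` is a DoS sequence. -/
def IsDoS (h τ : ℕ → ℝ) : Prop :=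
  0 ≤ h 1 ∧ (∀ n, 1 ≤ n → 0 ≤ τ n) ∧ (∀ n, 1 ≤ n → h n + τ n < h (n + 1))

/-- `B` is a duration-bound of `ξ`. -/
def IsDurationBound (h τ : ℕ → ℝ) (B : ℝ) : Prop :=
  0 ≤ B ∧ B ≤ 1 ∧ ∃ κ > (0 : ℝ), ∀ t ≥ (0 : ℝ), xiMeas h τ t ≤ κ + B * t

/-- `D(ξ)`: the set of duration-bounds of `ξ`. -/
def durBounds (h τ : ℕ → ℝ) : Set ℝ := {B | IsDurationBound h τ B}

/-- `B` is a (finite) frequency-bound of `ξ`. -/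
def IsFreqBound (h : ℕ → ℝ) (B : ℝ) : Prop :=
  0 ≤ B ∧ ∃ Λ > (0 : ℝ), ∀ t ≥ (0 : ℝ), (nXi h t : ℝ) ≤ Λ + B * t

/-- `F(ξ)`: the set of finite frequency-bounds of `ξ`. -/
def freqBounds (h : ℕ → ℝ) : Set ℝ := {B | IsFreqBound h B}

/-- Assumption 1: `ξ` is not an edge case. -/
def Assumption1 (h τ : ℕ → ℝ) : Prop :=
  sInf (durBounds h τ) < 1 ∧ (freqBounds h).Nonempty ∧
    ∃ Γ > (0 : ℝ), ∀ n, 1 ≤ n → τ n ≤ Γ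

/-- `Bd` is the duration estimator generated by (8). -/
def IsDurEstimator (h τ : ℕ → ℝ) (l : ℕ) (ε₀ θ : ℝ) (Bd : ℝ → ℝ) : Prop :=
  (∀ t, 0 ≤ t → t < h l + τ l → Bd t = ε₀) ∧
  ∀ n, ∀ hn : l ≤ n, ∀ t, h n + τ n ≤ t → t < h (n + 1) + τ (n + 1) →
    Bd t = (Finset.Icc l n).sup' (Finset.nonempty_Icc.mpr hn)
      (fun i => max ε₀ (θ * (xiMeas h τ (h i + τ i) / (h i + τ i)) + (1 - θ)))

/-- `Bf` is the frequency estimator generated by (9). -/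
def IsFreqEstimator (h : ℕ → ℝ) (l : ℕ) (ε₀ θ : ℝ) (Bf : ℝ → ℝ) : Prop :=
  (∀ t, 0 ≤ t → t < h l → Bf t = ε₀) ∧
  ∀ n, ∀ hn : l ≤ n, ∀ t, h n ≤ t → t < h (n + 1) →
    Bf t = (Finset.Icc l n).sup' (Finset.nonempty_Icc.mpr hn)
      (fun i => max ε₀ (((i : ℝ) / h i) / θ))

/-! The set `D(ξ)` is upward closed in `[0, 1]` and contains `1`, so every value in
`(inf D(ξ), 1]` is a duration bound. The estimator never exceeds `1` and dominates all its past
updates, so it suffices that one update `θ B_d(n₀) + (1 - θ)` exceeds `inf D(ξ)`. If none did, all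
empirical ratios `B_d(n)` would stay below `c = (inf D(ξ) - (1 - θ)) / θ < inf D(ξ)`, and since
the attacked time grows by at most `Γ` between two interval ends, `c` would be a duration bound.
The frequency bound forces `h n → ∞`, so every time after `h ℓ + τ ℓ` lies in an estimator window. -/

theorem exists_window_of_le_of_lt {α : Type*} [LinearOrder α] {s : ℕ → α} {l m : ℕ} {t : α}
    (hl : s l ≤ t) (hlm : l ≤ m) (hm : t < s m) :
    ∃ n, l ≤ n ∧ s n ≤ t ∧ t < s (n + 1) := by
  induction m, hlm using Nat.le_induction with
  | base => exact absurd hm hl.not_gt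
  | succ k hlk ih =>
    by_cases hk : s k ≤ t
    · exact ⟨k, hlk, hk, hm⟩
    · exact ih (lt_of_not_ge hk)

section DoS

variable {h τ : ℕ → ℝ}

namespace IsDoS

theorem end_lt_start (hξ : IsDoS h τ) {m n : ℕ} (hm : 1 ≤ m) (hmn : m < n) :
    h m + τ m < h n := by
  induction n, hmn using Nat.le_induction with
  | base => exact hξ.2.2 m hm
  | succ k hmk ih =>
    have hk : 1 ≤ k := by omega
    linarith [hξ.2.1 k hk, hξ.2.2 k hk]

theorem start_lt_start (hξ : IsDoS h τ) {m n : ℕ} (hm : 1 ≤ m) (hmn : m < n) : h m < h n := by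
  linarith [hξ.2.1 m hm, hξ.end_lt_start hm hmn]

theorem end_le_end (hξ : IsDoS h τ) {m n : ℕ} (hm : 1 ≤ m) (hmn : m ≤ n) :
    h m + τ m ≤ h n + τ n := by
  rcases hmn.eq_or_lt with rfl | hlt
  · exact le_rfl
  · linarith [hξ.end_lt_start hm hlt, hξ.2.1 n (by omega)]

theorem start_nonneg (hξ : IsDoS h τ) {n : ℕ} (hn : 1 ≤ n) : 0 ≤ h n := by
  rcases hn.eq_or_lt with rfl | hlt
  · exact hξ.1
  · linarith [hξ.1, hξ.start_lt_start le_rfl hlt]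

theorem end_pos (hξ : IsDoS h τ) {n : ℕ} (hn : 2 ≤ n) : 0 < h n + τ n := by
  linarith [hξ.1, hξ.2.1 1 le_rfl, hξ.2.1 n (by omega), hξ.end_lt_start le_rfl hn]

theorem nXi_start (hξ : IsDoS h τ) {N : ℕ} (hN : 1 ≤ N) : nXi h (h N) = N := by
  have hset : {x : ℝ | ∃ n : ℕ, 1 ≤ n ∧ h n = x} ∩ Icc 0 (h N) = h '' Icc 1 N := by
    ext x
    constructor
    · rintro ⟨⟨n, hn, rfl⟩, -, hnN⟩
      exact ⟨n, ⟨hn, not_lt.mp fun hlt => (hξ.start_lt_start hN hlt).not_ge hnN⟩, rfl⟩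
    · rintro ⟨n, ⟨hn, hnN⟩, rfl⟩
      refine ⟨⟨n, hn, rfl⟩, hξ.start_nonneg hn, ?_⟩
      rcases hnN.eq_or_lt with rfl | hlt
      exacts [le_rfl, (hξ.start_lt_start hn hlt).le]
  have hinj : InjOn h (Icc 1 N) := fun a ha b hb hab => by
    by_contra hne
    rcases Nat.lt_or_gt_of_ne hne with hlt | hlt
    exacts [(hξ.start_lt_start ha.1 hlt).ne hab, (hξ.start_lt_start hb.1 hlt).ne' hab]
  rw [nXi, hset, hinj.ncard_image, ← Finset.coe_Icc, ncard_coe_finset, Nat.card_Icc]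
  omega

theorem tendsto_start_atTop (hξ : IsDoS h τ) {Bf : ℝ} (hBf : IsFreqBound h Bf) :
    Tendsto h atTop atTop := by
  obtain ⟨hBf0, Λ, -, hΛ⟩ := hBf
  refine tendsto_atTop_atTop.2 fun M => ?_
  obtain ⟨N, hN⟩ := exists_nat_gt (Λ + Bf * M)
  refine ⟨N + 1, fun n hn => le_of_not_gt fun hnM => ?_⟩
  have hcount := hΛ (h n) (hξ.start_nonneg (by omega))
  rw [hξ.nXi_start (by omega)] at hcount
  have hnN : (N : ℝ) ≤ n := by exact_mod_cast (by omega : N ≤ n)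
  nlinarith

theorem exists_window (hξ : IsDoS h τ) (htop : Tendsto h atTop atTop) {l : ℕ} {t : ℝ}
    (ht : h l + τ l ≤ t) : ∃ n, l ≤ n ∧ h n + τ n ≤ t ∧ t < h (n + 1) + τ (n + 1) := by
  obtain ⟨m, hmt, hlm⟩ := ((htop.eventually_gt_atTop t).and (eventually_ge_atTop (l + 1))).exists
  exact exists_window_of_le_of_lt ht (by omega : l ≤ m)
    (by linarith [hξ.2.1 m (by omega)] : t < h m + τ m)

end IsDoS

theorem xiMeas_eq_measureReal (t : ℝ) : xiMeas h τ t = volume.real (DoSUnion h τ ∩ Icc 0 t) :=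
  rfl

theorem xiMeas_nonneg (t : ℝ) : 0 ≤ xiMeas h τ t := ENNReal.toReal_nonneg

theorem xiMeas_le_self {t : ℝ} (ht : 0 ≤ t) : xiMeas h τ t ≤ t := by
  rw [xiMeas_eq_measureReal]
  calc volume.real (DoSUnion h τ ∩ Icc 0 t) ≤ volume.real (Icc 0 t) :=
        measureReal_mono inter_subset_right measure_Icc_lt_top.ne
    _ = t := by rw [Real.volume_real_Icc_of_le ht, sub_zero]

theorem xiMeas_div_le_one (t : ℝ) : xiMeas h τ t / t ≤ 1 := by
  rcases le_or_gt 0 t with ht | ht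
  · exact div_le_one_of_le₀ (xiMeas_le_self ht) ht
  · exact (div_nonpos_of_nonneg_of_nonpos (xiMeas_nonneg t) ht.le).trans zero_le_one

theorem IsDoS.xiMeas_le_add_of_lt (hξ : IsDoS h τ) {n : ℕ} (hn : 1 ≤ n) {t : ℝ}
    (ht : t < h (n + 1) + τ (n + 1)) :
    xiMeas h τ t ≤ xiMeas h τ (h n + τ n) + τ (n + 1) := by
  have hsub : DoSUnion h τ ∩ Icc 0 t ⊆
      (DoSUnion h τ ∩ Icc 0 (h n + τ n)) ∪ Ico (h (n + 1)) (h (n + 1) + τ (n + 1)) := by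
    rintro x ⟨hxU, hx0, hxt⟩
    obtain ⟨m, hm, hxm⟩ := mem_iUnion₂.mp hxU
    rcases lt_trichotomy m (n + 1) with hlt | rfl | hgt
    · exact Or.inl ⟨hxU, hx0, hxm.2.le.trans (hξ.end_le_end hm (by omega))⟩
    · exact Or.inr hxm
    · linarith [hxm.1, hξ.end_lt_start (by omega) hgt]
  have hfin : volume ((DoSUnion h τ ∩ Icc 0 (h n + τ n)) ∪
      Ico (h (n + 1)) (h (n + 1) + τ (n + 1))) ≠ ⊤ :=
    (measure_union_lt_top ((measure_mono inter_subset_right).trans_lt measure_Icc_lt_top)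
      measure_Ico_lt_top).ne
  calc xiMeas h τ t
      ≤ xiMeas h τ (h n + τ n) + volume.real (Ico (h (n + 1)) (h (n + 1) + τ (n + 1))) :=
        (measureReal_mono hsub hfin).trans (measureReal_union_le _ _)
    _ = xiMeas h τ (h n + τ n) + τ (n + 1) := by
        rw [Real.volume_real_Ico_of_le (le_add_of_nonneg_right (hξ.2.1 (n + 1) (by omega))),
          add_sub_cancel_left]

theorem isDurationBound_of_le_at_ends (hξ : IsDoS h τ) (htop : Tendsto h atTop atTop)
    {Γ : ℝ} (hΓ : ∀ n, 1 ≤ n → τ n ≤ Γ) {l : ℕ} (hl : 1 ≤ l) {c : ℝ} (hc0 : 0 ≤ c)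
    (hc1 : c ≤ 1) (hends : ∀ n, l ≤ n → xiMeas h τ (h n + τ n) ≤ c * (h n + τ n)) :
    IsDurationBound h τ c := by
  have hsl : 0 ≤ h l + τ l := by linarith [hξ.start_nonneg hl, hξ.2.1 l hl]
  refine ⟨hc0, hc1, max Γ (h l + τ l) + 1, by positivity, fun t ht => ?_⟩
  rcases lt_or_ge t (h l + τ l) with htl | htl
  · nlinarith [xiMeas_le_self (h := h) (τ := τ) ht, le_max_right Γ (h l + τ l)]
  · obtain ⟨n, hln, hnt, htn⟩ := hξ.exists_window htop htl
    nlinarith [hξ.xiMeas_le_add_of_lt (by omega) htn, hends n hln, hΓ (n + 1) (by omega),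
      le_max_left Γ (h l + τ l)]

theorem IsDurationBound.mono {B B' : ℝ} (hB : IsDurationBound h τ B) (hBB' : B ≤ B')
    (hB' : B' ≤ 1) : IsDurationBound h τ B' := by
  obtain ⟨hB0, -, κ, hκ, hbound⟩ := hB
  exact ⟨hB0.trans hBB', hB', κ, hκ, fun t ht => (hbound t ht).trans (by nlinarith)⟩

theorem one_mem_durBounds : (1 : ℝ) ∈ durBounds h τ :=
  ⟨zero_le_one, le_rfl, 1, one_pos, fun t ht => by linarith [xiMeas_le_self (h := h) (τ := τ) ht]⟩

theorem mem_durBounds_of_sInf_lt {B : ℝ} (hB : sInf (durBounds h τ) < B) (hB1 : B ≤ 1) :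
    B ∈ durBounds h τ := by
  obtain ⟨B', hB', hB'B⟩ := exists_lt_of_csInf_lt ⟨1, one_mem_durBounds⟩ hB
  exact IsDurationBound.mono hB' hB'B.le hB1

theorem IsDoS.exists_sInf_durBounds_lt (hξ : IsDoS h τ) (htop : Tendsto h atTop atTop)
    {Γ : ℝ} (hΓ : ∀ n, 1 ≤ n → τ n ≤ Γ) {l : ℕ} (hl : 2 ≤ l) {θ : ℝ} (hθ : 0 < θ ∧ θ < 1)
    (hinf : sInf (durBounds h τ) < 1) :
    ∃ n, l ≤ n ∧
      sInf (durBounds h τ) < θ * (xiMeas h τ (h n + τ n) / (h n + τ n)) + (1 - θ) := by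
  set B := sInf (durBounds h τ)
  set c := (B - (1 - θ)) / θ
  by_contra! hupd
  have hratio : ∀ n, l ≤ n → xiMeas h τ (h n + τ n) / (h n + τ n) ≤ c := fun n hn =>
    (le_div_iff₀ hθ.1).2 (by linarith [hupd n hn])
  have hc0 : 0 ≤ c := (div_nonneg (xiMeas_nonneg _) (hξ.end_pos hl).le).trans (hratio l le_rfl)
  have hc1 : c ≤ 1 := (div_le_one hθ.1).2 (by linarith)
  have hcB : c < B := (div_lt_iff₀ hθ.1).2 (by nlinarith)
  have hc : IsDurationBound h τ c := isDurationBound_of_le_at_ends hξ htop hΓ (by omega) hc0 hc1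
    fun n hn => (div_le_iff₀ (hξ.end_pos (hl.trans hn))).1 (hratio n hn)
  exact hcB.not_ge (csInf_le ⟨0, fun _ hB => hB.1⟩ hc)

namespace IsDurEstimator

variable {l : ℕ} {ε₀ θ : ℝ} {Bd : ℝ → ℝ}

theorem update_le_apply (hBd : IsDurEstimator h τ l ε₀ θ Bd) {n : ℕ} (hln : l ≤ n) {t : ℝ}
    (hnt : h n + τ n ≤ t) (htn : t < h (n + 1) + τ (n + 1)) {i : ℕ} (hli : l ≤ i) (hin : i ≤ n) :
    θ * (xiMeas h τ (h i + τ i) / (h i + τ i)) + (1 - θ) ≤ Bd t := by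
  rw [hBd.2 n hln t hnt htn]
  exact Finset.le_sup'_of_le _ (Finset.mem_Icc.2 ⟨hli, hin⟩) (le_max_right _ _)

theorem apply_le_one (hBd : IsDurEstimator h τ l ε₀ θ Bd) (hε₀ : ε₀ ≤ 1) (hθ : 0 ≤ θ)
    {n : ℕ} (hln : l ≤ n) {t : ℝ} (hnt : h n + τ n ≤ t) (htn : t < h (n + 1) + τ (n + 1)) :
    Bd t ≤ 1 := by
  rw [hBd.2 n hln t hnt htn]
  refine Finset.sup'_le _ _ fun i _ => max_le hε₀ ?_
  nlinarith [mul_le_mul_of_nonneg_left (xiMeas_div_le_one (h := h) (τ := τ) (h i + τ i)) hθ]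

end IsDurEstimator

end DoS

/-- Theorem 1 (duration part): under Assumption 1, the estimator `Bd` generated
by (8) becomes a reliable duration-bound after some finite time `T`. -/
theorem estimator_duration_reliable (h τ : ℕ → ℝ) (hξ : IsDoS h τ)
    (hA1 : Assumption1 h τ) (l : ℕ) (hl : 2 ≤ l) (ε₀ θ : ℝ)
    (hε₀ : 0 < ε₀ ∧ ε₀ < 1) (hθ : 0 < θ ∧ θ < 1) (Bd : ℝ → ℝ)
    (hBd : IsDurEstimator h τ l ε₀ θ Bd) :
    ∃ T ≥ (0 : ℝ), ∀ t ≥ T, Bd t ∈ durBounds h τ := by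
  obtain ⟨hinf, ⟨Bf, hBf⟩, Γ, -, hΓ⟩ := hA1
  have htop := hξ.tendsto_start_atTop hBf
  obtain ⟨n₀, hln₀, hn₀⟩ := hξ.exists_sInf_durBounds_lt htop hΓ hl hθ hinf
  refine ⟨h n₀ + τ n₀, (hξ.end_pos (hl.trans hln₀)).le, fun t ht => ?_⟩
  obtain ⟨n, hln, hnt, htn⟩ := hξ.exists_window htop ((hξ.end_le_end (by omega) hln₀).trans ht)
  have hn₀n : n₀ ≤ n := by
    by_contra! hlt
    linarith [hξ.end_le_end (by omega) (hlt : n + 1 ≤ n₀)]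
  exact mem_durBounds_of_sInf_lt (hn₀.trans_le (hBd.update_le_apply hln hnt htn hln₀ hn₀n))
    (hBd.apply_le_one hε₀.2.le hθ.1.le hln hnt htn)
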